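/- arXiv:1906.05699 — 5 statements merged into one kernel-verified Lean document; each statement's English description precedes it below -/
import Mathlib

section
/- For all positive integers a, b, c, we have (a ∸ b) ∸ c = a ∸ (b · c). -/
/-- For positive integers `a`, `c` define `a ∸ c := a / gcd(a, c)`. -/
def dd (a c : ℕ) : ℕ := a / Nat.gcd a c

theorem stmt_1 (a b c : ℕ) (ha : 0 < a) (hb : 0 < b) (hc : 0 < c) :
    dd (dd a b) c = dd a (b * c) := by
  unfold dd
  rw [Nat.div_div_eq_div_mul]
  congr 1
  have h1 : Nat.gcd (a / Nat.gcd a b) c * Nat.gcd a b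
      = Nat.gcd (a / Nat.gcd a b * Nat.gcd a b) (c * Nat.gcd a b) :=
    (Nat.gcd_mul_right _ _ _).symm
  rw [Nat.div_mul_cancel (Nat.gcd_dvd_left a b)] at h1
  rw [mul_comm, h1]
  have h2 : c * Nat.gcd a b = Nat.gcd (a * c) (b * c) := by
    rw [Nat.gcd_mul_right, mul_comm]
  rw [h2, ← Nat.gcd_assoc, Nat.gcd_eq_left (dvd_mul_right a c)]
end

section
/- Let C and D be finite nonempty sets of positive integers. Then the following are equivalent: (1) for every a ∈ C there exist b ∈ D and k ∈ ℕ such that b divides a^k; (2) there exists k ∈ ℕ⁺ such that every product of k elements of C (with repetition allowed) is divisible by some element of D. -/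
theorem stmt_5 (C D : Finset ℕ) (hC : C.Nonempty) (hD : D.Nonempty)
    (hCpos : ∀ a ∈ C, 0 < a) (hDpos : ∀ b ∈ D, 0 < b) :
    (∀ a ∈ C, ∃ b ∈ D, ∃ k : ℕ, b ∣ a ^ k) ↔
      (∃ k : ℕ, 0 < k ∧ ∀ f : Fin k → ℕ, (∀ i, f i ∈ C) →
        ∃ b ∈ D, b ∣ ∏ i, f i) := by
  constructor
  · intro h
    have h' : ∀ a : ℕ, ∃ b k : ℕ, a ∈ C → b ∈ D ∧ b ∣ a ^ k := by
      intro a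
      by_cases ha : a ∈ C
      · obtain ⟨b, hb, k, hk⟩ := h a ha
        exact ⟨b, k, fun _ => ⟨hb, hk⟩⟩
      · exact ⟨0, 0, fun h => absurd h ha⟩
    choose b k hbk using h'
    set km := C.sup k with hkm
    refine ⟨C.card * km + 1, Nat.succ_pos _, fun f hf => ?_⟩
    have hcard : ∑ a ∈ C, (Finset.univ.filter fun i => f i = a).card
        = C.card * km + 1 := by
      rw [← Finset.card_eq_sum_card_fiberwise (fun i _ => hf i),
        Finset.card_univ, Fintype.card_fin]
    have hlt : ∑ a ∈ C, km < ∑ a ∈ C, (Finset.univ.filter fun i => f i = a).card := by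
      rw [hcard, Finset.sum_const, smul_eq_mul]
      exact Nat.lt_succ_self _
    obtain ⟨a, ha, hlt⟩ := Finset.exists_lt_of_sum_lt hlt
    have hka : k a ≤ (Finset.univ.filter fun i => f i = a).card :=
      le_trans (Finset.le_sup ha) (le_of_lt hlt)
    have hprod : (∏ i ∈ Finset.univ.filter fun i => f i = a, f i) ∣ ∏ i, f i :=
      Finset.prod_dvd_prod_of_subset _ _ _ (Finset.filter_subset _ _)
    have hpow : (∏ i ∈ Finset.univ.filter fun i => f i = a, f i)
        = a ^ (Finset.univ.filter fun i => f i = a).card := by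
      rw [Finset.prod_congr rfl (fun i hi => (Finset.mem_filter.mp hi).2),
        Finset.prod_const]
    obtain ⟨hbD, hbdvd⟩ := hbk a ha
    exact ⟨b a, hbD, dvd_trans (dvd_trans hbdvd (pow_dvd_pow a hka))
      (hpow ▸ hprod)⟩
  · intro ⟨K, hK, hall⟩ a ha
    obtain ⟨b, hb, hdvd⟩ := hall (fun _ => a) (fun _ => ha)
    refine ⟨b, hb, K, ?_⟩
    simpa using hdvd
end

section
/- Let C be a finite nonempty set of positive integers and let c be maximal for C, i.e., 1 ∉ C ∸ c and for every d > 1 dividing lcm(C ∸ c) we have 1 ∈ C ∸ (c·d), where C ∸ c := {a ∸ c | a ∈ C} and a ∸ c := a / gcd(a,c). Then every element of C ∸ c is divisible by some prime belonging to C ∸ c. -/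
/-- `C ∸ c := {a ∸ c | a ∈ C}`. -/
def ddSet (C : Finset ℕ) (c : ℕ) : Finset ℕ := C.image (fun a => dd a c)

/-- `c` is maximal for `C` if `1 ∉ C ∸ c` and `1 ∈ C ∸ (c·d)` for every
`d > 1` dividing `lcm (C ∸ c)`. -/
def MaximalForDd (C : Finset ℕ) (c : ℕ) : Prop :=
  1 ∉ ddSet C c ∧ ∀ d : ℕ, 1 < d → d ∣ (ddSet C c).lcm id → 1 ∈ ddSet C (c * d)

/-! Let `x ∈ C ∸ c`. Since `1 ∉ C ∸ c`, `x` has a prime factor `p`, and `p ∣ lcm (C ∸ c)`.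
Maximality gives `b ∈ C` with `b ∸ (c·p) = 1`, i.e. `b ∣ c·p`, hence `b ∣ gcd(b, c)·p`;
then `b ∸ c` divides `p` and is not `1`, so `p = b ∸ c ∈ C ∸ c`. -/

theorem dd_eq_one_iff {a m : ℕ} : dd a m = 1 ↔ a ≠ 0 ∧ a ∣ m := by
  unfold dd
  constructor
  · intro h
    have ha : a ≠ 0 := by rintro rfl; simp at h
    rw [Nat.div_eq_iff_eq_mul_left (Nat.gcd_pos_of_pos_left m (Nat.pos_of_ne_zero ha))
      (Nat.gcd_dvd_left a m), one_mul] at h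
    exact ⟨ha, Nat.gcd_eq_left_iff_dvd.mp h.symm⟩
  · rintro ⟨ha, hdvd⟩
    rw [Nat.gcd_eq_left hdvd, Nat.div_self (Nat.pos_of_ne_zero ha)]

theorem dd_dvd_of_dvd_mul {a c n : ℕ} (ha : a ≠ 0) (h : a ∣ c * n) : dd a c ∣ n := by
  unfold dd
  rw [Nat.div_dvd_iff_dvd_mul (Nat.gcd_dvd_left a c)
    (Nat.gcd_pos_of_pos_left c (Nat.pos_of_ne_zero ha))]
  exact Nat.dvd_gcd_mul_iff_dvd_mul.mpr h

theorem MaximalForDd.prime_mem_ddSet_of_dvd_lcm {C : Finset ℕ} {c p : ℕ}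
    (hmax : MaximalForDd C c) (hp : p.Prime) (hpl : p ∣ (ddSet C c).lcm id) :
    p ∈ ddSet C c := by
  obtain ⟨b, hb, hb1⟩ := Finset.mem_image.mp (hmax.2 p hp.one_lt hpl)
  obtain ⟨hb0, hbdvd⟩ := dd_eq_one_iff.mp hb1
  have hne : dd b c ≠ 1 := fun h => hmax.1 (Finset.mem_image.mpr ⟨b, hb, h⟩)
  have hp_eq : dd b c = p := ((Nat.dvd_prime hp).mp (dd_dvd_of_dvd_mul hb0 hbdvd)).resolve_left hne
  exact Finset.mem_image.mpr ⟨b, hb, hp_eq⟩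

theorem stmt_6_general (C : Finset ℕ)
    (c : ℕ) (hmax : MaximalForDd C c) :
    ∀ x ∈ ddSet C c, ∃ p, p.Prime ∧ p ∈ ddSet C c ∧ p ∣ x := by
  intro x hx
  have hx1 : x ≠ 1 := fun h => hmax.1 (h ▸ hx)
  obtain ⟨p, hp, hpx⟩ := Nat.exists_prime_and_dvd hx1
  exact ⟨p, hp, hmax.prime_mem_ddSet_of_dvd_lcm hp (hpx.trans (Finset.dvd_lcm hx)), hpx⟩

theorem stmt_6 (C : Finset ℕ) (hC : C.Nonempty) (hpos : ∀ a ∈ C, 0 < a)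
    (c : ℕ) (hc : 0 < c) (hmax : MaximalForDd C c) :
    ∀ x ∈ ddSet C c, ∃ p, p.Prime ∧ p ∈ ddSet C c ∧ p ∣ x :=
  stmt_6_general C c hmax
end

section
/- Let p be a prime. There is no function f : (ℤ/pℤ)^p → ℤ/pℤ that is both a polymorphism of the directed cycle of length p (f(x_1+1,…,x_p+1) = f(x_1,…,x_p)+1) and cyclic (f(x_1,…,x_p) = f(x_2,…,x_p,x_1)). -/
theorem stmt_11 (p : ℕ) (hp : p.Prime) :
    ¬ ∃ f : (ZMod p → ZMod p) → ZMod p,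
      (∀ x : ZMod p → ZMod p, f (fun i => x i + 1) = f x + 1) ∧
      (∀ x : ZMod p → ZMod p, f x = f (fun i => x (i + 1))) := by
  haveI : Fact p.Prime := ⟨hp⟩
  rintro ⟨f, h1, h2⟩
  have h := h2 (fun i => i)
  rw [h1 (fun i => i)] at h
  exact one_ne_zero (by linear_combination -h : (1 : ZMod p) = 0)
end

section
/- Let C be a finite nonempty set of positive integers and c a positive integer. There exists a function h : (C ∸ c) → C such that h(b) ∸ c = b for every b ∈ (C ∸ c), and for any such h and any a ∈ C dividing lcm{h(b) ∸ b : b ∈ C ∸ c}, the number a ∸ c equals 1. Consequently, if 1 ∉ C ∸ c then for this h no a ∈ C divides lcm{h(b) ∸ b : b ∈ C ∸ c}. -/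
theorem stmt_15 (C : Finset ℕ) (hC : C.Nonempty) (hpos : ∀ a ∈ C, 0 < a)
    (c : ℕ) (hc : 0 < c) :
    (∃ h : ℕ → ℕ, ∀ b ∈ ddSet C c, h b ∈ C ∧ dd (h b) c = b) ∧
    (∀ h : ℕ → ℕ, (∀ b ∈ ddSet C c, h b ∈ C ∧ dd (h b) c = b) →
      (∀ a ∈ C, a ∣ (ddSet C c).lcm (fun b => dd (h b) b) → dd a c = 1) ∧
      ((1 : ℕ) ∉ ddSet C c →
        ∀ a ∈ C, ¬ a ∣ (ddSet C c).lcm (fun b => dd (h b) b))) := by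
  constructor
  · refine ⟨fun b => if hb : ∃ a ∈ C, dd a c = b then hb.choose else 0, ?_⟩
    intro b hb
    rw [ddSet, Finset.mem_image] at hb
    obtain ⟨a, ha, hab⟩ := hb
    have hex : ∃ a ∈ C, dd a c = b := ⟨a, ha, hab⟩
    simp only [dif_pos hex]
    exact hex.choose_spec
  · intro h hh
    have key : ∀ a ∈ C, a ∣ (ddSet C c).lcm (fun b => dd (h b) b) → dd a c = 1 := by
      intro a ha hdvd
      have hlcm : (ddSet C c).lcm (fun b => dd (h b) b) ∣ c := by
        apply Finset.lcm_dvd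
        intro b hb
        obtain ⟨hmem, heq⟩ := hh b hb
        have hbpos : 0 < h b := hpos _ hmem
        have hgdvd : Nat.gcd (h b) c ∣ h b := Nat.gcd_dvd_left _ _
        have heq' : h b / Nat.gcd (h b) c = b := heq
        have hbpos' := Nat.div_pos (Nat.le_of_dvd hbpos hgdvd)
            (Nat.gcd_pos_of_pos_left c hbpos)
        rw [heq'] at hbpos'
        have hbdvd := Nat.div_dvd_of_dvd hgdvd
        rw [heq'] at hbdvd
        have hmul := (Nat.div_mul_cancel hgdvd).symm
        rw [heq'] at hmul
        have : dd (h b) b = Nat.gcd (h b) c := by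
          rw [dd, Nat.gcd_eq_right hbdvd]
          conv_lhs => rw [hmul]
          exact Nat.mul_div_cancel_left _ hbpos'
        rw [this]
        exact Nat.gcd_dvd_right _ _
      have hac : a ∣ c := hdvd.trans hlcm
      have : Nat.gcd a c = a := Nat.gcd_eq_left hac
      rw [dd, this, Nat.div_self (hpos a ha)]
    refine ⟨key, fun h1 a ha hdvd => h1 ?_⟩
    rw [← key a ha hdvd, ddSet]
    exact Finset.mem_image_of_mem _ ha
end
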